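/- (Theorem 1, LOS case, limit form.) Fix η ≥ 1, ℓ > 0, K_R > 0, complex numbers γ_1, …, γ_η, a direct-path angle pair (φ_0, θ_0), and scattered-path angles φ_1, …, φ_η, θ_1, …, θ_η such that for every i ∈ {1, …, η} one has e^{j(φ_i−φ_0)} ≠ 1 or e^{j(θ_i−θ_0)} ≠ 1. For N_r, N_t ∈ ℕ define the LOS channel H = √ℓ ( √(K_R/(K_R+1)) a_{N_r}(φ_0) a_{N_t}(θ_0)^* + √(1/(η(K_R+1))) Σ_{i=1}^{η} γ_i a_{N_r}(φ_i) a_{N_t}(θ_i)^* ), and let P_{N_r,N_t} = |w^* H f|² with w = a_{N_r}(φ_0)/√N_r and f = a_{N_t}(θ_0)/√N_t. Then P_{N_r,N_t}/(N_r N_t) → ℓ K_R/(K_R+1) as N_r → ∞ and N_t → ∞. -/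

import Mathlib

open Complex Finset Filter

noncomputable def ula (N : ℕ) (φ : ℝ) : Fin N → ℂ :=
  fun k => Complex.exp (-(Complex.I) * (k : ℕ) * (φ : ℂ))

lemma conj_ula_mul {N : ℕ} (α β : ℝ) (a : Fin N) :
    (starRingEnd ℂ) (ula N α a) * ula N β a =
      Complex.exp (-(Complex.I) * ((β : ℂ) - (α : ℂ))) ^ (a : ℕ) := by
  simp only [ula, ← Complex.exp_conj, ← Complex.exp_nat_mul, ← Complex.exp_add]
  congr 1
  simp only [map_mul, map_neg, Complex.conj_I, Complex.conj_natCast, Complex.conj_ofReal]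
  ring

lemma sum_conj_ula_self {N : ℕ} (α : ℝ) :
    ∑ a : Fin N, (starRingEnd ℂ) (ula N α a) * ula N α a = N := by
  simp [conj_ula_mul]

lemma norm_geom_sum_le {w : ℂ} (hw : ‖w‖ = 1) (hw1 : w ≠ 1) (N : ℕ) :
    ‖∑ a : Fin N, w ^ (a : ℕ)‖ ≤ 2 / ‖w - 1‖ := by
  rw [Fin.sum_univ_eq_sum_range, geom_sum_eq hw1, norm_div]
  have h1 : ‖w ^ N - 1‖ ≤ 2 := by
    calc ‖w ^ N - 1‖ ≤ ‖w ^ N‖ + ‖(1:ℂ)‖ := norm_sub_le _ _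
    _ = 2 := by simp [norm_pow, hw]; norm_num
  gcongr

lemma norm_geom_sum_le_card {w : ℂ} (hw : ‖w‖ = 1) (N : ℕ) :
    ‖∑ a : Fin N, w ^ (a : ℕ)‖ ≤ N := by
  calc ‖∑ a : Fin N, w ^ (a : ℕ)‖ ≤ ∑ a : Fin N, ‖w ^ (a : ℕ)‖ := norm_sum_le _ _
  _ = N := by simp [norm_pow, hw]

lemma norm_exp_unit (α β : ℝ) : ‖Complex.exp (-(Complex.I) * ((β : ℂ) - (α : ℂ)))‖ = 1 := by
  have : -(Complex.I) * ((β : ℂ) - (α : ℂ)) = ((α - β : ℝ) : ℂ) * Complex.I := by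
    push_cast; ring
  rw [this]
  exact Complex.norm_exp_ofReal_mul_I _

lemma sum_sum_mul' {m n : ℕ} (c : ℂ) (A : Fin m → ℂ) (B : Fin n → ℂ) :
    ∑ a, ∑ b, c * (A a * B b) = c * ((∑ a, A a) * (∑ b, B b)) := by
  rw [Finset.sum_mul_sum, Finset.mul_sum]
  exact Finset.sum_congr rfl fun a _ => by rw [Finset.mul_sum]

lemma sum_sum_sum' {m n k : ℕ} (c : ℂ) (g : Fin k → ℂ)
    (X : Fin k → Fin m → ℂ) (Y : Fin k → Fin n → ℂ) :
    ∑ a, ∑ b, c * ∑ i, g i * (X i a * Y i b)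
      = c * ∑ i, g i * ((∑ a, X i a) * (∑ b, Y i b)) := by
  calc ∑ a, ∑ b, c * ∑ i, g i * (X i a * Y i b)
      = ∑ a, ∑ b, ∑ i, (c * g i) * (X i a * Y i b) := by
        refine Finset.sum_congr rfl fun a _ => Finset.sum_congr rfl fun b _ => ?_
        rw [Finset.mul_sum]
        exact Finset.sum_congr rfl fun i _ => by ring
    _ = ∑ a, ∑ i, ∑ b, (c * g i) * (X i a * Y i b) :=
        Finset.sum_congr rfl fun a _ => Finset.sum_comm
    _ = ∑ i, ∑ a, ∑ b, (c * g i) * (X i a * Y i b) := Finset.sum_comm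
    _ = ∑ i, (c * g i) * ((∑ a, X i a) * (∑ b, Y i b)) :=
        Finset.sum_congr rfl fun i _ => sum_sum_mul' (c * g i) (X i) (Y i)
    _ = c * ∑ i, g i * ((∑ a, X i a) * (∑ b, Y i b)) := by
        rw [Finset.mul_sum]
        exact Finset.sum_congr rfl fun i _ => by ring

theorem los_beamformed_power_limit
    (η : ℕ) (hη : 0 < η) (ℓ : ℝ) (hℓ : 0 < ℓ) (K : ℝ) (hK : 0 < K)
    (γ : Fin η → ℂ) (φ₀ θ₀ : ℝ) (φ θ : Fin η → ℝ)
    (hangles : ∀ i : Fin η,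
      Complex.exp (Complex.I * ((φ i : ℂ) - (φ₀ : ℂ))) ≠ 1 ∨
      Complex.exp (Complex.I * ((θ i : ℂ) - (θ₀ : ℂ))) ≠ 1)
    (H : (Nr : ℕ) → (Nt : ℕ) → Fin Nr → Fin Nt → ℂ)
    (hH : ∀ Nr Nt, H Nr Nt = fun a b => (Real.sqrt ℓ : ℂ) *
      ((Real.sqrt (K / (K + 1)) : ℂ) * ula Nr φ₀ a * (starRingEnd ℂ) (ula Nt θ₀ b) +
        (Real.sqrt (1 / (η * (K + 1))) : ℂ) *
          ∑ i, γ i * ula Nr (φ i) a * (starRingEnd ℂ) (ula Nt (θ i) b)))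
    (P : ℕ → ℕ → ℝ)
    (hP : ∀ Nr Nt, P Nr Nt =
      ‖∑ a, ∑ b, (starRingEnd ℂ) (ula Nr φ₀ a / (Real.sqrt Nr : ℂ)) *
        H Nr Nt a b * (ula Nt θ₀ b / (Real.sqrt Nt : ℂ))‖ ^ 2) :
    Tendsto (fun p : ℕ × ℕ => P p.1 p.2 / ((p.1 : ℝ) * (p.2 : ℝ)))
      (atTop ×ˢ atTop) (nhds (ℓ * K / (K + 1))) := by
  set c₁ : ℂ := (Real.sqrt ℓ : ℂ) * (Real.sqrt (K / (K + 1)) : ℂ) with hc₁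
  set c₂ : ℂ := (Real.sqrt ℓ : ℂ) * (Real.sqrt (1 / (η * (K + 1))) : ℂ) with hc₂
  -- scattered-path partial sums
  set Sr : ℕ → Fin η → ℂ :=
    fun N i => ∑ a : Fin N, (starRingEnd ℂ) (ula N φ₀ a) * ula N (φ i) a with hSr
  set St : ℕ → Fin η → ℂ :=
    fun N i => ∑ b : Fin N, (starRingEnd ℂ) (ula N (θ i) b) * ula N θ₀ b with hSt
  -- the un-normalized double sum
  have key : ∀ Nr Nt : ℕ,
      (∑ a, ∑ b, (starRingEnd ℂ) (ula Nr φ₀ a) * H Nr Nt a b * ula Nt θ₀ b)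
        = c₁ * ((Nr : ℂ) * (Nt : ℂ)) + c₂ * ∑ i, γ i * (Sr Nr i * St Nt i) := by
    intro Nr Nt
    have step : ∀ (a : Fin Nr) (b : Fin Nt),
        (starRingEnd ℂ) (ula Nr φ₀ a) * H Nr Nt a b * ula Nt θ₀ b
          = c₁ * (((starRingEnd ℂ) (ula Nr φ₀ a) * ula Nr φ₀ a) *
              ((starRingEnd ℂ) (ula Nt θ₀ b) * ula Nt θ₀ b)) +
            c₂ * ∑ i, γ i * (((starRingEnd ℂ) (ula Nr φ₀ a) * ula Nr (φ i) a) *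
              ((starRingEnd ℂ) (ula Nt (θ i) b) * ula Nt θ₀ b)) := by
      intro a b
      rw [hH]
      simp only [mul_add, add_mul, Finset.mul_sum, Finset.sum_mul]
      congr 1
      · ring
      · exact Finset.sum_congr rfl fun i _ => by rw [hc₂]; ring
    calc (∑ a, ∑ b, (starRingEnd ℂ) (ula Nr φ₀ a) * H Nr Nt a b * ula Nt θ₀ b)
        = (∑ a : Fin Nr, ∑ b : Fin Nt,
            c₁ * (((starRingEnd ℂ) (ula Nr φ₀ a) * ula Nr φ₀ a) *
              ((starRingEnd ℂ) (ula Nt θ₀ b) * ula Nt θ₀ b))) +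
          ∑ a : Fin Nr, ∑ b : Fin Nt,
            c₂ * ∑ i, γ i * (((starRingEnd ℂ) (ula Nr φ₀ a) * ula Nr (φ i) a) *
              ((starRingEnd ℂ) (ula Nt (θ i) b) * ula Nt θ₀ b)) := by
          simp only [step, Finset.sum_add_distrib]
      _ = c₁ * ((Nr : ℂ) * (Nt : ℂ)) + c₂ * ∑ i, γ i * (Sr Nr i * St Nt i) := by
          rw [sum_sum_mul', sum_sum_sum', sum_conj_ula_self, sum_conj_ula_self]
  -- eventual form of the normalized beamformed signal
  set F : ℕ × ℕ → ℂ := fun p =>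
    c₁ + c₂ * (∑ i, γ i * (Sr p.1 i * St p.2 i)) / ((p.1 : ℂ) * (p.2 : ℂ)) with hF
  -- the error term tends to zero
  have herr : Tendsto F (atTop ×ˢ atTop) (nhds c₁) := by
    have h0 : Tendsto (fun p : ℕ × ℕ =>
        c₂ * (∑ i, γ i * (Sr p.1 i * St p.2 i)) / ((p.1 : ℂ) * (p.2 : ℂ)))
        (atTop ×ˢ atTop) (nhds 0) := by
      have : ∀ p : ℕ × ℕ, c₂ * (∑ i, γ i * (Sr p.1 i * St p.2 i)) / ((p.1 : ℂ) * (p.2 : ℂ))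
          = c₂ * ∑ i, γ i * (Sr p.1 i * St p.2 i) / ((p.1 : ℂ) * (p.2 : ℂ)) := by
        intro p
        rw [mul_div_assoc, Finset.sum_div]
      simp only [this]
      have := tendsto_finset_sum (univ : Finset (Fin η))
        (f := fun i (p : ℕ × ℕ) => γ i * (Sr p.1 i * St p.2 i) / ((p.1 : ℂ) * (p.2 : ℂ)))
        (x := atTop ×ˢ atTop) (a := fun _ => (0:ℂ)) ?_
      · have h2 := this.const_mul c₂
        simpa using h2
      intro i _
      -- each scattered term vanishes in the limit
      rcases hangles i with hφi | hθi
      · -- receive-side geometric sum is bounded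
        set w : ℂ := Complex.exp (-(Complex.I) * ((φ i : ℂ) - (φ₀ : ℂ))) with hw
        have hwnorm : ‖w‖ = 1 := norm_exp_unit _ _
        have hw1 : w ≠ 1 := by
          intro h
          apply hφi
          have : w = (Complex.exp (Complex.I * ((φ i : ℂ) - (φ₀ : ℂ))))⁻¹ := by
            rw [hw, ← Complex.exp_neg]; congr 1; ring
          rw [this] at h
          exact inv_eq_one.mp h
        have hSrb : ∀ N, ‖Sr N i‖ ≤ 2 / ‖w - 1‖ := by
          intro N
          have : Sr N i = ∑ a : Fin N, w ^ (a : ℕ) := by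
            simp only [hSr, conj_ula_mul, hw]
          rw [this]
          exact norm_geom_sum_le hwnorm hw1 N
        have hStb : ∀ N, ‖St N i‖ ≤ N := by
          intro N
          have : St N i = ∑ b : Fin N,
              (Complex.exp (-(Complex.I) * ((θ₀ : ℂ) - (θ i : ℂ)))) ^ (b : ℕ) := by
            simp only [hSt, conj_ula_mul]
          rw [this]
          exact norm_geom_sum_le_card (norm_exp_unit _ _) N
        apply squeeze_zero_norm'
          (a := fun p : ℕ × ℕ => ‖γ i‖ * (2 / ‖w - 1‖) / (p.1 : ℝ))
        · filter_upwards [tendsto_fst.eventually (eventually_ge_atTop 1),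
            tendsto_snd.eventually (eventually_ge_atTop 1)] with p h1 h2
          have hNr : (0:ℝ) < p.1 := by exact_mod_cast h1
          have hNt : (0:ℝ) < p.2 := by exact_mod_cast h2
          have hnorm : ‖γ i * (Sr p.1 i * St p.2 i) / ((p.1 : ℂ) * (p.2 : ℂ))‖
              = ‖γ i‖ * (‖Sr p.1 i‖ * ‖St p.2 i‖) / ((p.1 : ℝ) * (p.2 : ℝ)) := by
            rw [norm_div, norm_mul, norm_mul, norm_mul]
            simp [Complex.norm_natCast]
          rw [hnorm]
          calc ‖γ i‖ * (‖Sr p.1 i‖ * ‖St p.2 i‖) / ((p.1 : ℝ) * (p.2 : ℝ))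
              ≤ ‖γ i‖ * ((2 / ‖w - 1‖) * (p.2 : ℝ)) / ((p.1 : ℝ) * (p.2 : ℝ)) := by
                gcongr
                · exact hSrb p.1
                · exact hStb p.2
            _ = ‖γ i‖ * (2 / ‖w - 1‖) / (p.1 : ℝ) := by
                rw [show ‖γ i‖ * ((2 / ‖w - 1‖) * (p.2 : ℝ))
                    = (‖γ i‖ * (2 / ‖w - 1‖)) * (p.2 : ℝ) by ring,
                  mul_comm ((p.1 : ℝ)) ((p.2 : ℝ)), ← div_div, mul_div_assoc,
                  div_self hNt.ne', mul_one]
        · have : Tendsto (fun n : ℕ => ‖γ i‖ * (2 / ‖w - 1‖) / (n : ℝ)) atTop (nhds 0) :=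
            tendsto_const_div_atTop_nhds_zero_nat _
          exact this.comp tendsto_fst
      · -- transmit-side geometric sum is bounded
        set w : ℂ := Complex.exp (-(Complex.I) * ((θ₀ : ℂ) - (θ i : ℂ))) with hw
        have hwnorm : ‖w‖ = 1 := norm_exp_unit _ _
        have hw1 : w ≠ 1 := by
          intro h
          apply hθi
          have : w = Complex.exp (Complex.I * ((θ i : ℂ) - (θ₀ : ℂ))) := by
            rw [hw]; congr 1; ring
          rw [← this]; exact h
        have hStb : ∀ N, ‖St N i‖ ≤ 2 / ‖w - 1‖ := by
          intro N
          have : St N i = ∑ b : Fin N, w ^ (b : ℕ) := by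
            simp only [hSt, conj_ula_mul, hw]
          rw [this]
          exact norm_geom_sum_le hwnorm hw1 N
        have hSrb : ∀ N, ‖Sr N i‖ ≤ N := by
          intro N
          have : Sr N i = ∑ a : Fin N,
              (Complex.exp (-(Complex.I) * ((φ i : ℂ) - (φ₀ : ℂ)))) ^ (a : ℕ) := by
            simp only [hSr, conj_ula_mul]
          rw [this]
          exact norm_geom_sum_le_card (norm_exp_unit _ _) N
        apply squeeze_zero_norm'
          (a := fun p : ℕ × ℕ => ‖γ i‖ * (2 / ‖w - 1‖) / (p.2 : ℝ))
        · filter_upwards [tendsto_fst.eventually (eventually_ge_atTop 1),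
            tendsto_snd.eventually (eventually_ge_atTop 1)] with p h1 h2
          have hNr : (0:ℝ) < p.1 := by exact_mod_cast h1
          have hNt : (0:ℝ) < p.2 := by exact_mod_cast h2
          have hnorm : ‖γ i * (Sr p.1 i * St p.2 i) / ((p.1 : ℂ) * (p.2 : ℂ))‖
              = ‖γ i‖ * (‖Sr p.1 i‖ * ‖St p.2 i‖) / ((p.1 : ℝ) * (p.2 : ℝ)) := by
            rw [norm_div, norm_mul, norm_mul, norm_mul]
            simp [Complex.norm_natCast]
          rw [hnorm]
          calc ‖γ i‖ * (‖Sr p.1 i‖ * ‖St p.2 i‖) / ((p.1 : ℝ) * (p.2 : ℝ))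
              ≤ ‖γ i‖ * ((p.1 : ℝ) * (2 / ‖w - 1‖)) / ((p.1 : ℝ) * (p.2 : ℝ)) := by
                gcongr
                · exact hSrb p.1
                · exact hStb p.2
            _ = ‖γ i‖ * (2 / ‖w - 1‖) / (p.2 : ℝ) := by
                rw [show ‖γ i‖ * ((p.1 : ℝ) * (2 / ‖w - 1‖))
                    = (‖γ i‖ * (2 / ‖w - 1‖)) * (p.1 : ℝ) by ring,
                  ← div_div, mul_div_assoc,
                  div_self hNr.ne', mul_one]
        · have : Tendsto (fun n : ℕ => ‖γ i‖ * (2 / ‖w - 1‖) / (n : ℝ)) atTop (nhds 0) :=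
            tendsto_const_div_atTop_nhds_zero_nat _
          exact this.comp tendsto_snd
    simpa using tendsto_const_nhds.add h0
  -- eventual identification of P/(Nr Nt) with ‖F‖²
  have heq : (fun p : ℕ × ℕ => P p.1 p.2 / ((p.1 : ℝ) * (p.2 : ℝ)))
      =ᶠ[atTop ×ˢ atTop] fun p => ‖F p‖ ^ 2 := by
    filter_upwards [tendsto_fst.eventually (eventually_ge_atTop 1),
      tendsto_snd.eventually (eventually_ge_atTop 1)] with p h1 h2
    obtain ⟨Nr, Nt⟩ := p
    simp only at h1 h2 ⊢
    have hNr : (0:ℝ) < Nr := by exact_mod_cast h1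
    have hNt : (0:ℝ) < Nt := by exact_mod_cast h2
    have hNrC : ((Nr:ℕ) : ℂ) ≠ 0 := by exact_mod_cast hNr.ne'
    have hNtC : ((Nt:ℕ) : ℂ) ≠ 0 := by exact_mod_cast hNt.ne'
    -- the inner double sum with normalization
    have hZ : (∑ a, ∑ b, (starRingEnd ℂ) (ula Nr φ₀ a / (Real.sqrt Nr : ℂ)) *
          H Nr Nt a b * (ula Nt θ₀ b / (Real.sqrt Nt : ℂ)))
        = (∑ a, ∑ b, (starRingEnd ℂ) (ula Nr φ₀ a) * H Nr Nt a b * ula Nt θ₀ b)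
            / ((Real.sqrt Nr : ℂ) * (Real.sqrt Nt : ℂ)) := by
      rw [Finset.sum_div]
      refine Finset.sum_congr rfl fun a _ => ?_
      rw [Finset.sum_div]
      refine Finset.sum_congr rfl fun b _ => ?_
      rw [map_div₀]
      have : (starRingEnd ℂ) ((Real.sqrt Nr : ℝ) : ℂ) = ((Real.sqrt Nr : ℝ) : ℂ) :=
        Complex.conj_ofReal _
      rw [this]
      ring
    have hsq : ((Real.sqrt Nr : ℝ) : ℂ) * ((Real.sqrt Nr : ℝ) : ℂ) = ((Nr:ℕ) : ℂ) := by
      rw [← Complex.ofReal_mul, Real.mul_self_sqrt (Nat.cast_nonneg Nr)]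
      norm_cast
    have hsq' : ((Real.sqrt Nt : ℝ) : ℂ) * ((Real.sqrt Nt : ℝ) : ℂ) = ((Nt:ℕ) : ℂ) := by
      rw [← Complex.ofReal_mul, Real.mul_self_sqrt (Nat.cast_nonneg Nt)]
      norm_cast
    set X : ℂ := c₁ * ((Nr : ℂ) * (Nt : ℂ)) + c₂ * ∑ i, γ i * (Sr Nr i * St Nt i) with hX
    have hFeq : F (Nr, Nt) = X / ((Nr : ℂ) * (Nt : ℂ)) := by
      rw [hF, hX]
      simp only
      field_simp
    rw [hP, hZ, key, ← hX, hFeq, norm_div, norm_div, norm_mul, norm_mul,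
      Complex.norm_real, Complex.norm_real, RCLike.norm_natCast, RCLike.norm_natCast,
      Real.norm_eq_abs, Real.norm_eq_abs,
      _root_.abs_of_nonneg (Real.sqrt_nonneg _), _root_.abs_of_nonneg (Real.sqrt_nonneg _)]
    have hs : (Real.sqrt Nr * Real.sqrt Nt) ^ 2 = (Nr : ℝ) * (Nt : ℝ) := by
      rw [mul_pow, Real.sq_sqrt (Nat.cast_nonneg _), Real.sq_sqrt (Nat.cast_nonneg _)]
    rw [div_pow, div_pow, hs, div_div]
    congr 1
    ring
  -- conclusion
  have hc : ‖c₁‖ ^ 2 = ℓ * K / (K + 1) := by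
    rw [hc₁, ← Complex.ofReal_mul, Complex.norm_real, Real.norm_eq_abs,
      _root_.abs_of_nonneg (by positivity), mul_pow, Real.sq_sqrt hℓ.le,
      Real.sq_sqrt (by positivity : (0:ℝ) ≤ K / (K + 1)), mul_div_assoc]
  have hT : Tendsto (fun p : ℕ × ℕ => P p.1 p.2 / ((p.1 : ℝ) * (p.2 : ℝ)))
      (atTop ×ˢ atTop) (nhds (‖c₁‖ ^ 2)) :=
    Tendsto.congr' heq.symm ((herr.norm).pow 2)
  rwa [hc] at hT
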